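/- Let A₁,...,A_N be 2×2 complex matrices without a common eigenvector, whose joint spectral radius equals 1. Then sup over n ≥ 1 of max over i₁,...,i_n ∈ {1,...,N} of ‖A_{i_n}···A_{i_1}‖ is at most κ⁻¹ · max_j ‖A_j‖, where κ := min_{‖u‖=‖v‖=1} max_{X ∈ {I,A₁,...,A_N}} |⟨Xu,v⟩| > 0. -/

import Mathlib

noncomputable def opNormC (A : Matrix (Fin 2) (Fin 2) ℂ) : ℝ :=
  ‖LinearMap.toContinuousLinearMap (Matrix.toEuclideanLin A)‖

/-- The maximum over X ∈ {I, A₁, …, A_N} of |⟨Xu, v⟩|. -/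
noncomputable def maxInner {N : ℕ} (A : Fin N → Matrix (Fin 2) (Fin 2) ℂ)
    (u v : EuclideanSpace ℂ (Fin 2)) : ℝ :=
  ⨆ i : Option (Fin N), ‖(inner ℂ (Matrix.toEuclideanLin (i.elim 1 A) u) v : ℂ)‖

/-- κ := min over unit vectors u, v of maxInner A u v. -/
noncomputable def kappa {N : ℕ} (A : Fin N → Matrix (Fin 2) (Fin 2) ℂ) : ℝ :=
  sInf {r : ℝ | ∃ u v : EuclideanSpace ℂ (Fin 2), ‖u‖ = 1 ∧ ‖v‖ = 1 ∧ r = maxInner A u v}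

/-- A₁, …, A_N have a common eigenvector. -/
def HasCommonEigenvector {N : ℕ} (A : Fin N → Matrix (Fin 2) (Fin 2) ℂ) : Prop :=
  ∃ w : Fin 2 → ℂ, w ≠ 0 ∧ ∀ j, ∃ c : ℂ, (A j).mulVec w = c • w

/-- Product A_{σ(n)} ⋯ A_{σ(1)}. -/
noncomputable def prodW {N : ℕ} (A : Fin N → Matrix (Fin 2) (Fin 2) ℂ) (σ : ℕ → Fin N) :
    ℕ → Matrix (Fin 2) (Fin 2) ℂ
  | 0 => 1
  | n + 1 => A (σ (n + 1)) * prodW A σ n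

/-- max over words of length n of ‖A_{i_n} ⋯ A_{i_1}‖. -/
noncomputable def wordSup {N : ℕ} (A : Fin N → Matrix (Fin 2) (Fin 2) ℂ) (n : ℕ) : ℝ :=
  ⨆ σ : ℕ → Fin N, opNormC (prodW A σ n)

/-!
κ is the minimum of a lower semicontinuous function on the compact set of pairs of unit vectors, so
it is attained; if it vanished at `(u, v)` then `⟪u, v⟫ = 0` and `⟪A_j u, v⟫ = 0`, so in dimension
two every `A_j u` lies in `v^⊥ = ℂ u`.

Given products `P` and `Q`, take unit `x`, `y` with `‖P x‖ = ‖P‖` and `‖Q† y‖ = ‖Q‖`; testing the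
definition of κ on the normalised `P x` and `Q† y` gives some `X ∈ {I, A₁, …, A_N}` with
`‖Q X P‖ ≥ κ ‖Q‖ ‖P‖`. Applying this with `Q = P` over and over, a word `P` of length `n ≥ 1` with
`κ ‖P‖ = c > 1` yields words `R` of arbitrarily large length `k` with `κ ‖R‖ ≥ c^((k+1)/(n+1))`
(each squaring at most doubles `k + 1`), contradicting joint spectral radius `1`. So `κ ‖P‖ ≤ 1` for
every nonempty word, while `max_j ‖A_j‖ ≥ 1` because it bounds the joint spectral radius.
-/

open Matrix Filter Topology
-- With this instance `‖A‖` is definitionally `opNormC A`.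
open scoped Matrix.Norms.L2Operator InnerProductSpace

section
variable {𝕜 E F : Type*} [RCLike 𝕜] [NormedAddCommGroup E] [NormedSpace 𝕜 E]
  [ProperSpace E] [Nontrivial E] [NormedAddCommGroup F] [NormedSpace 𝕜 F]

theorem ContinuousLinearMap.exists_norm_eq_one_norm_apply_eq (f : E →L[𝕜] F) :
    ∃ x, ‖x‖ = 1 ∧ ‖f x‖ = ‖f‖ := by
  obtain ⟨x, hx, hmax⟩ := ((isCompact_sphere (0 : E) 1).image
    (by fun_prop : Continuous fun x => ‖f x‖)).sSup_mem
    (Set.nonempty_coe_sort.mp (NormedSpace.sphere_nonempty_rclike 𝕜 zero_le_one) |>.image _)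
  exact ⟨x, mem_sphere_zero_iff_norm.mp hx, hmax.trans f.sSup_sphere_eq_norm⟩

theorem ContinuousLinearMap.exists_apply_eq_norm_smul [Nontrivial F] (f : E →L[𝕜] F) :
    ∃ x y, ‖x‖ = 1 ∧ ‖y‖ = 1 ∧ f x = (‖f‖ : 𝕜) • y := by
  obtain ⟨x, hx, hfx⟩ := f.exists_norm_eq_one_norm_apply_eq
  rcases eq_or_ne (f x) 0 with h0 | h0
  · obtain ⟨⟨y, hy⟩⟩ := NormedSpace.sphere_nonempty_rclike 𝕜 (E := F) zero_le_one
    refine ⟨x, y, hx, mem_sphere_zero_iff_norm.mp hy, ?_⟩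
    rw [h0, ← hfx, h0, norm_zero, RCLike.ofReal_zero, zero_smul]
  · refine ⟨x, (‖f x‖⁻¹ : 𝕜) • f x, hx, norm_smul_inv_norm h0, ?_⟩
    rw [smul_smul, ← hfx, mul_inv_cancel₀ (RCLike.ofReal_ne_zero.mpr (norm_ne_zero_iff.mpr h0)),
      one_smul]

end

section
variable {𝕜 E : Type*} [RCLike 𝕜] [NormedAddCommGroup E] [InnerProductSpace 𝕜 E]
  [ProperSpace E] [Nontrivial E]

open ContinuousLinearMap in
theorem exists_norm_mul_norm_mul_norm_inner_le (P Q : E →L[𝕜] E) :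
    ∃ a b : E, ‖a‖ = 1 ∧ ‖b‖ = 1 ∧
      ∀ X : E →L[𝕜] E, ‖Q‖ * ‖P‖ * ‖⟪X a, b⟫_𝕜‖ ≤ ‖Q * X * P‖ := by
  obtain ⟨x, a, hx, ha, hPx⟩ := P.exists_apply_eq_norm_smul
  obtain ⟨y, b, hy, hb, hQy⟩ := (adjoint Q).exists_apply_eq_norm_smul
  rw [adjoint.norm_map] at hQy
  refine ⟨a, b, ha, hb, fun X => ?_⟩
  calc ‖Q‖ * ‖P‖ * ‖⟪X a, b⟫_𝕜‖ = ‖⟪X (P x), adjoint Q y⟫_𝕜‖ := by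
        rw [hPx, hQy, map_smul, inner_smul_left, inner_smul_right, norm_mul, norm_mul,
          RCLike.norm_conj, RCLike.norm_ofReal, RCLike.norm_ofReal, abs_norm, abs_norm]
        ring
    _ = ‖⟪(Q * X * P) x, y⟫_𝕜‖ := by rw [adjoint_inner_right]; rfl
    _ ≤ ‖(Q * X * P) x‖ * ‖y‖ := norm_inner_le_norm _ _
    _ ≤ ‖Q * X * P‖ := by simpa [hx, hy] using (Q * X * P).le_opNorm x

end

lemma le_of_tendsto_root_of_frequently_mul_pow_le {W : ℕ → ℝ} {ρ C b : ℝ}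
    (hW : Tendsto (fun k : ℕ => W k ^ ((1 : ℝ) / k)) atTop (𝓝 ρ)) (hC : 0 < C) (hb : 0 ≤ b)
    (h : ∃ᶠ k in atTop, C * b ^ k ≤ W k) : b ≤ ρ := by
  have hlim : Tendsto (fun k : ℕ => C ^ ((1 : ℝ) / k) * b) atTop (𝓝 b) := by
    simpa using ((Real.continuousAt_const_rpow hC.ne').tendsto.comp
      tendsto_one_div_atTop_nhds_zero_nat).mul_const b
  refine le_of_tendsto_of_tendsto_of_frequently hlim hW
    ((h.and_eventually (eventually_ge_atTop 1)).mono fun k ⟨hk, hk1⟩ => ?_)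
  calc C ^ ((1 : ℝ) / k) * b = (C * b ^ k) ^ ((1 : ℝ) / k) := by
        rw [Real.mul_rpow hC.le (by positivity), one_div, Real.pow_rpow_inv_natCast hb (by omega)]
    _ ≤ W k ^ ((1 : ℝ) / k) := Real.rpow_le_rpow (by positivity) hk (by positivity)

lemma le_of_tendsto_root_of_le_pow {W : ℕ → ℝ} {ρ b : ℝ}
    (hW : Tendsto (fun k : ℕ => W k ^ ((1 : ℝ) / k)) atTop (𝓝 ρ)) (hW0 : ∀ k, 0 ≤ W k)
    (hb : 0 ≤ b) (h : ∀ k, W k ≤ b ^ k) : ρ ≤ b := by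
  refine le_of_tendsto hW ((eventually_ge_atTop 1).mono fun k hk => ?_)
  calc W k ^ ((1 : ℝ) / k) ≤ (b ^ k) ^ ((1 : ℝ) / k) :=
        Real.rpow_le_rpow (hW0 k) (h k) (by positivity)
    _ = b := by rw [one_div, Real.pow_rpow_inv_natCast hb (by omega)]

theorem mem_span_singleton_of_inner_eq_zero {𝕜 E : Type*} [RCLike 𝕜] [NormedAddCommGroup E]
    [InnerProductSpace 𝕜 E] (hE : Module.finrank 𝕜 E = 2) {u v w : E} (hu : u ≠ 0) (hv : v ≠ 0)
    (huv : ⟪u, v⟫_𝕜 = 0) (hwv : ⟪w, v⟫_𝕜 = 0) : w ∈ 𝕜 ∙ u := by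
  have : FiniteDimensional 𝕜 E := Module.finite_of_finrank_eq_succ hE
  have : Fact (Module.finrank 𝕜 E = 1 + 1) := ⟨hE⟩
  have hspan : 𝕜 ∙ u = (𝕜 ∙ v)ᗮ :=
    Submodule.eq_of_le_of_finrank_eq
      ((Submodule.span_singleton_le_iff_mem _ _).mpr
        (Submodule.mem_orthogonal_singleton_iff_inner_left.mpr huv))
      (by rw [finrank_span_singleton hu, Submodule.finrank_orthogonal_span_singleton (n := 1) hv])
  exact hspan ▸ Submodule.mem_orthogonal_singleton_iff_inner_left.mpr hwv

local notation "ℂ²" => EuclideanSpace ℂ (Fin 2)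

section Kappa
variable {N : ℕ} (A : Fin N → Matrix (Fin 2) (Fin 2) ℂ)

lemma norm_inner_le_maxInner (u v : ℂ²) (i : Option (Fin N)) :
    ‖⟪toEuclideanCLM (𝕜 := ℂ) (i.elim 1 A) u, v⟫_ℂ‖ ≤ maxInner A u v :=
  le_ciSup (f := fun i : Option (Fin N) => ‖⟪toEuclideanCLM (𝕜 := ℂ) (i.elim 1 A) u, v⟫_ℂ‖)
    (Set.finite_range _).bddAbove i

lemma exists_norm_inner_eq_maxInner (u v : ℂ²) :
    ∃ i : Option (Fin N), ‖⟪toEuclideanCLM (𝕜 := ℂ) (i.elim 1 A) u, v⟫_ℂ‖ = maxInner A u v :=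
  exists_eq_ciSup_of_finite

lemma maxInner_nonneg (u v : ℂ²) : 0 ≤ maxInner A u v :=
  (norm_nonneg _).trans (norm_inner_le_maxInner A u v none)

lemma kappa_le_maxInner {u v : ℂ²} (hu : ‖u‖ = 1) (hv : ‖v‖ = 1) :
    kappa A ≤ maxInner A u v :=
  csInf_le ⟨0, fun _ ⟨u, v, _, _, hr⟩ => hr ▸ maxInner_nonneg A u v⟩ ⟨u, v, hu, hv, rfl⟩

lemma kappa_nonneg : 0 ≤ kappa A :=
  Real.sInf_nonneg fun _ ⟨u, v, _, _, hr⟩ => hr ▸ maxInner_nonneg A u v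

lemma lowerSemicontinuous_maxInner :
    LowerSemicontinuous fun p : ℂ² × ℂ² => maxInner A p.1 p.2 :=
  lowerSemicontinuous_ciSup (fun _ => (Set.finite_range _).bddAbove) fun i =>
    (show Continuous fun p : ℂ² × ℂ² => ‖⟪toEuclideanCLM (𝕜 := ℂ) (i.elim 1 A) p.1, p.2⟫_ℂ‖
      by fun_prop).lowerSemicontinuous

lemma exists_kappa_eq_maxInner :
    ∃ u v : ℂ², ‖u‖ = 1 ∧ ‖v‖ = 1 ∧ kappa A = maxInner A u v := by
  have hS : (Metric.sphere (0 : ℂ²) 1 ×ˢ Metric.sphere (0 : ℂ²) 1).Nonempty :=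
    (NormedSpace.sphere_nonempty.mpr zero_le_one).prod (NormedSpace.sphere_nonempty.mpr zero_le_one)
  obtain ⟨⟨u, v⟩, ⟨hu, hv⟩, hmin⟩ := LowerSemicontinuousOn.exists_isMinOn hS
    ((isCompact_sphere _ _).prod (isCompact_sphere _ _))
    ((lowerSemicontinuous_maxInner A).lowerSemicontinuousOn _)
  rw [mem_sphere_zero_iff_norm] at hu hv
  refine ⟨u, v, hu, hv, IsLeast.csInf_eq ⟨⟨u, v, hu, hv, rfl⟩, ?_⟩⟩
  rintro _ ⟨u', v', hu', hv', rfl⟩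
  exact isMinOn_iff.mp hmin (u', v')
    ⟨mem_sphere_zero_iff_norm.mpr hu', mem_sphere_zero_iff_norm.mpr hv'⟩

lemma maxInner_pos (h : ¬ HasCommonEigenvector A) {u v : ℂ²} (hu : ‖u‖ = 1) (hv : ‖v‖ = 1) :
    0 < maxInner A u v := by
  by_contra! h0
  have hzero (i : Option (Fin N)) : ⟪toEuclideanCLM (𝕜 := ℂ) (i.elim 1 A) u, v⟫_ℂ = 0 :=
    norm_le_zero_iff.mp ((norm_inner_le_maxInner A u v i).trans h0)
  have hu0 : u ≠ 0 := ne_zero_of_norm_ne_zero (hu ▸ one_ne_zero)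
  have hv0 : v ≠ 0 := ne_zero_of_norm_ne_zero (hv ▸ one_ne_zero)
  refine h ⟨WithLp.ofLp u, by simpa using hu0, fun j => ?_⟩
  obtain ⟨c, hc⟩ := Submodule.mem_span_singleton.mp <|
    mem_span_singleton_of_inner_eq_zero finrank_euclideanSpace_fin hu0 hv0
      (by simpa using hzero none) (hzero (some j))
  exact ⟨c, by rw [← ofLp_toEuclideanCLM]; exact (congrArg WithLp.ofLp hc).symm⟩

theorem kappa_pos (h : ¬ HasCommonEigenvector A) : 0 < kappa A := by
  obtain ⟨u, v, hu, hv, hκ⟩ := exists_kappa_eq_maxInner A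
  exact hκ ▸ maxInner_pos A h hu hv

end Kappa

section Words
variable {N : ℕ} (A : Fin N → Matrix (Fin 2) (Fin 2) ℂ)

inductive IsWordProd : ℕ → Matrix (Fin 2) (Fin 2) ℂ → Prop
  | one : IsWordProd 0 1
  | cons (j : Fin N) {n : ℕ} {P : Matrix (Fin 2) (Fin 2) ℂ} :
      IsWordProd n P → IsWordProd (n + 1) (A j * P)

variable {A}

lemma IsWordProd.mul {m n : ℕ} {P Q : Matrix (Fin 2) (Fin 2) ℂ} (hP : IsWordProd A m P)
    (hQ : IsWordProd A n Q) : IsWordProd A (m + n) (Q * P) := by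
  induction hQ with
  | one => simpa using hP
  | cons j _ ih => rw [← add_assoc, mul_assoc]; exact ih.cons j

lemma prodW_update_of_lt (σ : ℕ → Fin N) (j : Fin N) {m n : ℕ} (hnm : n < m) :
    prodW A (Function.update σ m j) n = prodW A σ n := by
  induction n with
  | zero => rfl
  | succ n ih => simp [prodW, Function.update_of_ne hnm.ne, ih (by omega)]

lemma isWordProd_prodW (σ : ℕ → Fin N) (n : ℕ) : IsWordProd A n (prodW A σ n) := by
  induction n with
  | zero => exact .one
  | succ n ih => exact ih.cons (σ (n + 1))

lemma IsWordProd.exists_prodW_eq [Nonempty (Fin N)] {n : ℕ} {P : Matrix (Fin 2) (Fin 2) ℂ}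
    (hP : IsWordProd A n P) : ∃ σ, prodW A σ n = P := by
  induction hP with
  | one => exact ⟨fun _ => Classical.arbitrary _, rfl⟩
  | @cons j n _ _ ih =>
    obtain ⟨σ, rfl⟩ := ih
    exact ⟨Function.update σ (n + 1) j, by simp [prodW, prodW_update_of_lt]⟩

lemma norm_le_iSup_opNormC (j : Fin N) : ‖A j‖ ≤ ⨆ j, opNormC (A j) :=
  le_ciSup (f := fun j => opNormC (A j)) (Set.finite_range _).bddAbove j

lemma iSup_opNormC_nonneg : 0 ≤ ⨆ j, opNormC (A j) :=
  Real.iSup_nonneg fun j => norm_nonneg (A j)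

lemma norm_prodW_le (σ : ℕ → Fin N) (n : ℕ) : ‖prodW A σ n‖ ≤ (⨆ j, opNormC (A j)) ^ n := by
  induction n with
  | zero => simp [prodW]
  | succ n ih =>
    rw [prodW, pow_succ']
    exact (norm_mul_le _ _).trans
      (mul_le_mul (norm_le_iSup_opNormC _) ih (norm_nonneg _) iSup_opNormC_nonneg)

lemma IsWordProd.norm_le_wordSup [Nonempty (Fin N)] {n : ℕ} {P : Matrix (Fin 2) (Fin 2) ℂ}
    (hP : IsWordProd A n P) : ‖P‖ ≤ wordSup A n := by
  obtain ⟨σ, rfl⟩ := hP.exists_prodW_eq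
  exact le_ciSup (f := fun σ => opNormC (prodW A σ n))
    ⟨_, Set.forall_mem_range.mpr (norm_prodW_le · n)⟩ σ

variable (A)

lemma wordSup_nonneg (n : ℕ) : 0 ≤ wordSup A n :=
  Real.iSup_nonneg fun σ => norm_nonneg (prodW A σ n)

lemma wordSup_le_pow (n : ℕ) : wordSup A n ≤ (⨆ j, opNormC (A j)) ^ n :=
  Real.iSup_le (norm_prodW_le · n) (pow_nonneg iSup_opNormC_nonneg n)

end Words

section Growth
variable {N : ℕ} {A : Fin N → Matrix (Fin 2) (Fin 2) ℂ}

lemma exists_kappa_mul_le_norm_mul_mul (P Q : Matrix (Fin 2) (Fin 2) ℂ) :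
    ∃ i : Option (Fin N), kappa A * (‖Q‖ * ‖P‖) ≤ ‖Q * i.elim 1 A * P‖ := by
  obtain ⟨a, b, ha, hb, hab⟩ := exists_norm_mul_norm_mul_norm_inner_le
    (toEuclideanCLM (𝕜 := ℂ) P) (toEuclideanCLM (𝕜 := ℂ) Q)
  obtain ⟨i, hi⟩ := exists_norm_inner_eq_maxInner A a b
  refine ⟨i, ?_⟩
  calc kappa A * (‖Q‖ * ‖P‖) ≤ ‖Q‖ * ‖P‖ * maxInner A a b := by
        rw [mul_comm]; gcongr; exact kappa_le_maxInner A ha hb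
    _ ≤ ‖Q * i.elim 1 A * P‖ := by
        rw [← hi, cstar_norm_def Q, cstar_norm_def P, cstar_norm_def (Q * _ * P), map_mul, map_mul]
        exact hab _

lemma IsWordProd.exists_kappa_mul_le {m n : ℕ} {P Q : Matrix (Fin 2) (Fin 2) ℂ}
    (hP : IsWordProd A m P) (hQ : IsWordProd A n Q) :
    ∃ k R, IsWordProd A k R ∧ m + n ≤ k ∧ k ≤ m + n + 1 ∧ kappa A * (‖Q‖ * ‖P‖) ≤ ‖R‖ := by
  obtain ⟨i, hi⟩ := exists_kappa_mul_le_norm_mul_mul (A := A) P Q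
  cases i with
  | none => exact ⟨m + n, Q * P, hP.mul hQ, le_rfl, by omega, by simpa using hi⟩
  | some j =>
    refine ⟨m + 1 + n, Q * (A j * P), (hP.cons j).mul hQ, by omega, by omega, ?_⟩
    simpa [mul_assoc] using hi

lemma IsWordProd.frequently_pow_le_kappa_mul_norm {b : ℝ} (hb : 1 ≤ b) {n : ℕ}
    {P : Matrix (Fin 2) (Fin 2) ℂ} (hn : 1 ≤ n) (hP : IsWordProd A n P)
    (hbP : b ^ (n + 1) ≤ kappa A * ‖P‖) :
    ∃ᶠ k in atTop, ∃ R, IsWordProd A k R ∧ b ^ (k + 1) ≤ kappa A * ‖R‖ := by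
  suffices ∀ m, ∃ k, m < k ∧ ∃ R, IsWordProd A k R ∧ b ^ (k + 1) ≤ kappa A * ‖R‖ from
    frequently_atTop.mpr fun m => (this m).imp fun k ⟨hmk, hk⟩ => ⟨hmk.le, hk⟩
  intro m
  induction m with
  | zero => exact ⟨n, hn, P, hP, hbP⟩
  | succ m ih =>
    obtain ⟨k, hmk, R, hR, hbR⟩ := ih
    obtain ⟨k', R', hR', hk'1, hk'2, hκR'⟩ := hR.exists_kappa_mul_le hR
    refine ⟨k', by omega, R', hR', ?_⟩
    calc b ^ (k' + 1) ≤ (b ^ (k + 1)) ^ 2 := by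
          rw [← pow_mul]; exact pow_le_pow_right₀ hb (by omega)
      _ ≤ (kappa A * ‖R‖) ^ 2 := by gcongr
      _ = kappa A * (kappa A * (‖R‖ * ‖R‖)) := by ring
      _ ≤ kappa A * ‖R'‖ := by gcongr; exact kappa_nonneg A

lemma IsWordProd.kappa_mul_norm_le_one [Nonempty (Fin N)] (hκ : 0 < kappa A)
    (hjsr : Tendsto (fun n : ℕ => wordSup A n ^ ((1 : ℝ) / n)) atTop (𝓝 1)) {n : ℕ}
    {P : Matrix (Fin 2) (Fin 2) ℂ} (hn : 1 ≤ n) (hP : IsWordProd A n P) :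
    kappa A * ‖P‖ ≤ 1 := by
  by_contra! hc
  set b := (kappa A * ‖P‖) ^ ((↑(n + 1))⁻¹ : ℝ)
  have hb : 1 < b := Real.one_lt_rpow hc (by positivity)
  have hbP : b ^ (n + 1) = kappa A * ‖P‖ := Real.rpow_inv_natCast_pow (by positivity) (by omega)
  have hfreq : ∃ᶠ k in atTop, b / kappa A * b ^ k ≤ wordSup A k :=
    (hP.frequently_pow_le_kappa_mul_norm hb.le hn hbP.le).mono fun k ⟨R, hR, hbR⟩ => by
      calc b / kappa A * b ^ k = b ^ (k + 1) / kappa A := by ring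
        _ ≤ ‖R‖ := by rw [div_le_iff₀' hκ]; exact hbR
        _ ≤ wordSup A k := hR.norm_le_wordSup
  linarith [le_of_tendsto_root_of_frequently_mul_pow_le hjsr (by positivity) (by positivity) hfreq]

end Growth

/-- uniform bound κ⁻¹ · max_j ‖A_j‖ for products of matrices with no
common eigenvector and joint spectral radius 1, together with κ > 0. -/
theorem stmt5 {N : ℕ} (hN : 0 < N) (A : Fin N → Matrix (Fin 2) (Fin 2) ℂ)
    (h : ¬ HasCommonEigenvector A)
    (hjsr : Filter.Tendsto (fun n : ℕ => wordSup A n ^ ((1 : ℝ) / n)) Filter.atTop (nhds 1)) :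
    0 < kappa A ∧ ∀ n : ℕ, 1 ≤ n → wordSup A n ≤ (kappa A)⁻¹ * ⨆ j, opNormC (A j) := by
  have : Nonempty (Fin N) := Fin.pos_iff_nonempty.mp hN
  have hκ : 0 < kappa A := kappa_pos A h
  have hM : 1 ≤ ⨆ j, opNormC (A j) := le_of_tendsto_root_of_le_pow hjsr (wordSup_nonneg A)
    iSup_opNormC_nonneg (wordSup_le_pow A)
  refine ⟨hκ, fun n hn => ?_⟩
  calc wordSup A n ≤ (kappa A)⁻¹ * 1 := ciSup_le fun σ =>
        (le_inv_mul_iff₀ hκ).mpr ((isWordProd_prodW σ n).kappa_mul_norm_le_one hκ hjsr hn)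
    _ ≤ (kappa A)⁻¹ * ⨆ j, opNormC (A j) := mul_le_mul_of_nonneg_left hM (inv_nonneg.mpr hκ.le)
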